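/- Let ν ≥ 2 be an integer, let φ ∈ L²(ℝ) vanish almost everywhere outside [−ν+1, ν], and let j ∈ ℕ satisfy 2^j ≥ 2ν. For m ∈ {0, …, ν−1}, define the periodized function φ^per_{j,m} : [0,1] → ℝ by φ^per_{j,m}(x) = φ_{j,m}(x) + φ_{j, 2^j + m}(x), where φ_{j,k}(x) := 2^{j/2} φ(2^j x − k). Then for every n ∈ ℕ: ∫₀¹ φ^per_{j,m}(x) w_n(x) dx = Σ_{l=−ν+1}^{−m−1} 2^{−j/2} w_n((2^j + m + l)/2^j) · ∫₀¹ φ(x+l) w_{⌊n/2^j⌋}(x) dx + Σ_{l=−m}^{ν−1} 2^{−j/2} w_n((m+l)/2^j) · ∫₀¹ φ(x+l) w_{⌊n/2^j⌋}(x) dx (sums over empty index ranges are zero). -/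

import Mathlib

/-!
On a dyadic interval `[c / 2^j, (c + 1) / 2^j)` the Walsh function factors as
`w_n(x) = w_n(c / 2^j) · w_{⌊n / 2^j⌋}(2^j x − c)`: the first `j` dyadic digits of `x` are those
of `c / 2^j`, and the later ones are the digits of `2^j x − c`, weighted by the binary digits of
`⌊n / 2^j⌋`. Substituting `t = 2^j x − c` on each of the `2^j` intervals writes `∫₀¹ φ_{j,k} w_n`
as a sum over `l = c − k` of `2^{−j/2} w_n((k + l) / 2^j) ∫₀¹ φ(t + l) w_{⌊n / 2^j⌋}(t)`. The
support of `φ` kills the terms with `l ∉ [−ν + 1, ν − 1]`, and `2^j ≥ 2ν` leaves exactly the two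
stated ranges for `k = m` and `k = 2^j + m`.
-/

open MeasureTheory

/-- `natDigit n i` is the `i`-th binary digit `n^(i)` (for `i ≥ 1`) of `n ∈ ℕ`,
so that `n = Σ_{i ≥ 1} n^(i) 2^(i-1)`. -/
def natDigit (n i : ℕ) : ℕ := (n / 2 ^ (i - 1)) % 2

/-- `dyadicDigit x i` is the `i`-th dyadic digit `x^(i) = ⌊2^i x⌋ − 2⌊2^(i−1) x⌋`
(for `i ≥ 1`) of `x ∈ [0,1)`. -/
noncomputable def dyadicDigit (x : ℝ) (i : ℕ) : ℤ :=
  ⌊(2 : ℝ) ^ i * x⌋ - 2 * ⌊(2 : ℝ) ^ (i - 1) * x⌋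

/-- The sequency-ordered Walsh function
`w_n(x) = (−1)^{Σ_{i≥1} (n^(i) + n^(i+1)) x^(i)}`; the sum is finite since
`n^(i) = 0` for `i > n`, so it may be truncated at `i = n + 1`. -/
noncomputable def walsh (n : ℕ) (x : ℝ) : ℝ :=
  (-1 : ℝ) ^ ∑ i ∈ Finset.Icc 1 (n + 1),
    (natDigit n i + natDigit n (i + 1)) * (dyadicDigit x i).toNat

/-- The dyadic XOR `x ⊕ y := Σ_{i≥1} |x^(i) − y^(i)| 2^{−i}` of `x, y ∈ [0,1)`. -/
noncomputable def dyadicXor (x y : ℝ) : ℝ :=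
  ∑' i : ℕ, |(dyadicDigit x (i + 1) : ℝ) - (dyadicDigit y (i + 1) : ℝ)| / 2 ^ (i + 1)

theorem dyadicDigit_eq_floor_emod (x : ℝ) {i : ℕ} (hi : 1 ≤ i) :
    dyadicDigit x i = ⌊2 ^ i * x⌋ % 2 := by
  have half : (2 : ℝ) ^ (i - 1) * x = 2 ^ i * x / (2 : ℕ) := by
    rw [← Nat.sub_add_cancel hi, pow_succ]; push_cast; ring_nf
  rw [dyadicDigit, half, Int.floor_div_natCast, Int.emod_def]
  rfl

theorem dyadicDigit_add_div_two_pow_of_le (k : ℤ) {t : ℝ} (ht₀ : 0 ≤ t) (ht₁ : t < 1)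
    {i j : ℕ} (hi : 1 ≤ i) (hij : i ≤ j) :
    dyadicDigit ((k + t) / 2 ^ j) i = dyadicDigit (k / 2 ^ j) i := by
  obtain ⟨d, rfl⟩ := Nat.exists_eq_add_of_le' hij
  have scale : ∀ s : ℝ, 2 ^ i * (s / 2 ^ (d + i)) = s / (2 ^ d : ℕ) := fun s => by
    push_cast; field_simp; ring
  rw [dyadicDigit_eq_floor_emod _ hi, dyadicDigit_eq_floor_emod _ hi, scale, scale,
    Int.floor_div_natCast, Int.floor_div_natCast, Int.floor_intCast_add, Int.floor_intCast,
    Int.floor_eq_zero_iff.2 ⟨ht₀, ht₁⟩, add_zero]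

theorem dyadicDigit_add_div_two_pow_of_lt (k : ℤ) (t : ℝ) {i j : ℕ} (hij : j < i) :
    dyadicDigit ((k + t) / 2 ^ j) i = dyadicDigit t (i - j) := by
  obtain ⟨p, rfl⟩ := Nat.exists_eq_add_of_lt hij
  have scale : (2 : ℝ) ^ (j + p + 1) * ((k + t) / 2 ^ j) =
      ((2 * (2 ^ p * k) : ℤ) : ℝ) + 2 ^ (j + p + 1 - j) * t := by
    rw [show j + p + 1 - j = p + 1 by omega]; push_cast; field_simp; ring
  rw [dyadicDigit_eq_floor_emod _ (by omega), dyadicDigit_eq_floor_emod _ (by omega), scale,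
    Int.floor_intCast_add, Int.mul_add_emod_self_left]

theorem dyadicDigit_intCast_div_two_pow_of_lt (k : ℤ) {i j : ℕ} (hij : j < i) :
    dyadicDigit (k / 2 ^ j) i = 0 := by
  simpa [dyadicDigit] using dyadicDigit_add_div_two_pow_of_lt k 0 hij

theorem natDigit_div_two_pow (n j : ℕ) {i : ℕ} (hi : 1 ≤ i) :
    natDigit (n / 2 ^ j) i = natDigit n (j + i) := by
  rw [natDigit, natDigit, Nat.div_div_eq_div_mul, ← pow_add, Nat.add_sub_assoc hi]

theorem natDigit_eq_zero_of_lt {n i : ℕ} (h : n + 1 < i) : natDigit n i = 0 := by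
  rw [natDigit, Nat.div_eq_of_lt, Nat.zero_mod]
  calc n < 2 ^ n := Nat.lt_two_pow_self
    _ ≤ 2 ^ (i - 1) := Nat.pow_le_pow_right two_pos (by omega)

/-- The summand of index `i + 1` in the exponent of `walsh n x`. -/
noncomputable def walshExponent (n : ℕ) (x : ℝ) (i : ℕ) : ℕ :=
  (natDigit n (i + 1) + natDigit n (i + 2)) * (dyadicDigit x (i + 1)).toNat

theorem walsh_eq_neg_one_pow_sum_range (n : ℕ) (x : ℝ) {M : ℕ} (hM : n + 1 ≤ M) :
    walsh n x = (-1) ^ ∑ i ∈ Finset.range M, walshExponent n x i := by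
  rw [walsh, ← Finset.Ico_add_one_right_eq_Icc, ← Finset.sum_Ico_add' _ 0 (n + 1) 1,
    ← Finset.range_eq_Ico]
  refine congrArg _ (Finset.sum_subset (Finset.range_subset_range.2 hM) fun i _ hi => ?_)
  rw [Finset.mem_range, not_lt] at hi
  show walshExponent n x i = 0
  rw [walshExponent, natDigit_eq_zero_of_lt (by omega), natDigit_eq_zero_of_lt (by omega),
    add_zero, zero_mul]

theorem walshExponent_add_div_two_pow_of_lt (n j : ℕ) (k : ℤ) {t : ℝ} (ht₀ : 0 ≤ t) (ht₁ : t < 1)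
    {i : ℕ} (hi : i < j) :
    walshExponent n ((k + t) / 2 ^ j) i = walshExponent n (k / 2 ^ j) i := by
  rw [walshExponent, walshExponent, dyadicDigit_add_div_two_pow_of_le k ht₀ ht₁ (by omega) hi]

theorem walshExponent_add_div_two_pow_add (n j : ℕ) (k : ℤ) (t : ℝ) (i : ℕ) :
    walshExponent n ((k + t) / 2 ^ j) (j + i) = walshExponent (n / 2 ^ j) t i := by
  rw [walshExponent, walshExponent, dyadicDigit_add_div_two_pow_of_lt k t (by omega),
    natDigit_div_two_pow n j (by omega), natDigit_div_two_pow n j (by omega)]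
  simp only [add_assoc, Nat.add_sub_cancel_left]

theorem walshExponent_intCast_div_two_pow_add (n j : ℕ) (k : ℤ) (i : ℕ) :
    walshExponent n (k / 2 ^ j) (j + i) = 0 := by
  rw [walshExponent, dyadicDigit_intCast_div_two_pow_of_lt k (by omega), Int.toNat_zero, mul_zero]

theorem walsh_add_div_two_pow (n j : ℕ) (k : ℤ) {t : ℝ} (ht₀ : 0 ≤ t) (ht₁ : t < 1) :
    walsh n ((k + t) / 2 ^ j) = walsh n (k / 2 ^ j) * walsh (n / 2 ^ j) t := by
  have hM : n + 1 ≤ j + (n + 1) := by omega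
  rw [walsh_eq_neg_one_pow_sum_range n _ hM, walsh_eq_neg_one_pow_sum_range n _ hM,
    walsh_eq_neg_one_pow_sum_range (n / 2 ^ j) t (Nat.succ_le_succ (Nat.div_le_self n _)),
    ← pow_add, Finset.sum_range_add _ j, Finset.sum_range_add _ j,
    Finset.sum_congr rfl fun i hi => walshExponent_add_div_two_pow_of_lt n j k ht₀ ht₁
      (Finset.mem_range.1 hi)]
  simp only [walshExponent_add_div_two_pow_add, walshExponent_intCast_div_two_pow_add,
    Finset.sum_const_zero, add_zero]

theorem norm_walsh (n : ℕ) (x : ℝ) : ‖walsh n x‖ = 1 := by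
  simp [walsh]

theorem measurable_walsh (n : ℕ) : Measurable (walsh n) := by
  unfold walsh dyadicDigit
  measurability

theorem intervalIntegrable_scaled_mul_walsh {φ : ℝ → ℝ} (hφ : LocallyIntegrable φ) (n j : ℕ)
    (k a b : ℝ) :
    IntervalIntegrable (fun x => 2 ^ ((j : ℝ) / 2) * φ (2 ^ j * x - k) * walsh n x) volume a b := by
  have h2j : (2 : ℝ) ^ j ≠ 0 := by positivity
  have hcomp : IntervalIntegrable (fun x => φ (2 ^ j * x - k)) volume a b := by
    simpa [h2j] using ((hφ.integrableOn_isCompact isCompact_uIcc).intervalIntegrable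
      (a := 2 ^ j * a - k) (b := 2 ^ j * b - k) |>.comp_sub_right k).comp_mul_left (c := 2 ^ j)
  rw [intervalIntegrable_iff] at hcomp ⊢
  exact (hcomp.const_mul _).mul_bdd (measurable_walsh n).aestronglyMeasurable
    (ae_of_all _ fun x => (norm_walsh n x).le)

theorem inv_two_pow_mul_two_rpow_half (j : ℕ) :
    ((2 : ℝ) ^ j)⁻¹ * 2 ^ ((j : ℝ) / 2) = 2 ^ (-(j : ℝ) / 2) := by
  rw [← Real.rpow_natCast, ← Real.rpow_neg zero_le_two, ← Real.rpow_add zero_lt_two]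
  ring_nf

theorem integral_scaled_mul_walsh_dyadic (φ : ℝ → ℝ) (n j : ℕ) (k l : ℤ) :
    ∫ x in ((k : ℝ) + l) / 2 ^ j..((k : ℝ) + l + 1) / 2 ^ j,
        2 ^ ((j : ℝ) / 2) * φ (2 ^ j * x - k) * walsh n x =
      2 ^ (-(j : ℝ) / 2) * walsh n ((k + l) / 2 ^ j) *
        ∫ t in (0 : ℝ)..1, φ (t + l) * walsh (n / 2 ^ j) t := by
  have h2j : (2 : ℝ) ^ j ≠ 0 := by positivity
  have hsub := intervalIntegral.integral_comp_div_add
    (fun x => 2 ^ ((j : ℝ) / 2) * φ (2 ^ j * x - k) * walsh n x) h2j (((k : ℝ) + l) / 2 ^ j)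
    (a := 0) (b := 1)
  rw [zero_div, zero_add, show 1 / 2 ^ j + ((k : ℝ) + l) / 2 ^ j = ((k : ℝ) + l + 1) / 2 ^ j by
    ring] at hsub
  calc _ = ((2 : ℝ) ^ j)⁻¹ * ∫ t in (0 : ℝ)..1, 2 ^ ((j : ℝ) / 2) *
          φ (2 ^ j * (t / 2 ^ j + (k + l) / 2 ^ j) - k) *
            walsh n (t / 2 ^ j + (k + l) / 2 ^ j) := by
        rw [hsub, smul_eq_mul, inv_mul_cancel_left₀ h2j]
    _ = ((2 : ℝ) ^ j)⁻¹ * ∫ t in (0 : ℝ)..1, (2 ^ ((j : ℝ) / 2) * walsh n ((k + l) / 2 ^ j)) *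
          (φ (t + l) * walsh (n / 2 ^ j) t) := by
        refine congrArg _ (intervalIntegral.integral_congr_Ioo_of_le zero_le_one fun t ht => ?_)
        have harg : 2 ^ j * (t / 2 ^ j + (k + l) / 2 ^ j) - k = t + l := by field_simp; ring
        have hpt : t / 2 ^ j + (k + l) / 2 ^ j = (((k + l : ℤ) : ℝ) + t) / 2 ^ j := by
          push_cast; ring
        rw [harg, hpt, walsh_add_div_two_pow n j _ ht.1.le ht.2, Int.cast_add]
        ring
    _ = _ := by
        rw [intervalIntegral.integral_const_mul, ← inv_two_pow_mul_two_rpow_half]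
        ring

theorem Finset.sum_range_eq_sum_Ico_add {M : Type*} [AddCommMonoid M] (f : ℤ → M) (N : ℕ)
    (k : ℤ) : ∑ c ∈ Finset.range N, f c = ∑ l ∈ Finset.Ico (-k) (N - k), f (k + l) := by
  refine Finset.sum_nbij' (fun c => (c : ℤ) - k) (fun l => (k + l).toNat) ?_ ?_ ?_ ?_ ?_ <;>
    intro x hx <;> simp only [Finset.mem_range, Finset.mem_Ico] at hx ⊢
  all_goals first | omega | simp

theorem integral_scaled_mul_walsh_eq_sum {φ : ℝ → ℝ} (hφ : LocallyIntegrable φ) (n j : ℕ)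
    (k : ℤ) :
    ∫ x in (0 : ℝ)..1, 2 ^ ((j : ℝ) / 2) * φ (2 ^ j * x - k) * walsh n x =
      ∑ l ∈ Finset.Ico (-k) (2 ^ j - k), 2 ^ (-(j : ℝ) / 2) * walsh n ((k + l) / 2 ^ j) *
        ∫ t in (0 : ℝ)..1, φ (t + l) * walsh (n / 2 ^ j) t := by
  have hsplit := intervalIntegral.sum_integral_adjacent_intervals (n := 2 ^ j)
    (a := fun c : ℕ => (c : ℝ) / 2 ^ j) fun c _ => intervalIntegrable_scaled_mul_walsh hφ n j k _ _
  have hreindex := Finset.sum_range_eq_sum_Ico_add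
    (fun c : ℤ => ∫ x in (c : ℝ) / 2 ^ j..((c : ℝ) + 1) / 2 ^ j,
      2 ^ ((j : ℝ) / 2) * φ (2 ^ j * x - k) * walsh n x) (2 ^ j) k
  push_cast at hsplit hreindex
  rw [zero_div, div_self (by positivity)] at hsplit
  rw [← hsplit, hreindex]
  exact Finset.sum_congr rfl fun l _ => integral_scaled_mul_walsh_dyadic φ n j k l

theorem integral_shift_mul_eq_zero {φ : ℝ → ℝ} {a b : ℝ} (hφ : ∀ᵐ x, x ∉ Set.Icc a b → φ x = 0)
    (h : ℝ → ℝ) {l : ℝ} (hl : l + 1 ≤ a ∨ b ≤ l) : ∫ t in (0 : ℝ)..1, φ (t + l) * h t = 0 := by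
  have hshift := (measurePreserving_add_right volume l).quasiMeasurePreserving.ae hφ
  rw [intervalIntegral.integral_of_le zero_le_one, integral_Ioc_eq_integral_Ioo]
  refine setIntegral_eq_zero_of_ae_eq_zero (hshift.mono fun t ht ⟨ht₀, ht₁⟩ => ?_)
  rw [ht fun ⟨ha, hb⟩ => by rcases hl with hl | hl <;> linarith, zero_mul]

theorem walsh_periodic_left_edge_general (ν : ℕ) (φ : ℝ → ℝ)
    (hL2 : MemLp φ 2 volume)
    (hsupp : ∀ᵐ x : ℝ, x ∉ Set.Icc (-(ν : ℝ) + 1) (ν : ℝ) → φ x = 0)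
    (j : ℕ) (hj : 2 * ν ≤ 2 ^ j) (m : ℕ) (hm : m < ν) (n : ℕ) :
    ∫ x in (0 : ℝ)..1,
        ((2 : ℝ) ^ ((j : ℝ) / 2) * φ (2 ^ j * x - m) +
          (2 : ℝ) ^ ((j : ℝ) / 2) * φ (2 ^ j * x - (2 ^ j + m))) * walsh n x =
      (∑ l ∈ Finset.Icc (-(ν : ℤ) + 1) (-(m : ℤ) - 1),
        (2 : ℝ) ^ (-(j : ℝ) / 2) * walsh n (((2 : ℝ) ^ j + m + l) / 2 ^ j) *
          ∫ x in (0 : ℝ)..1, φ (x + l) * walsh (n / 2 ^ j) x) +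
      ∑ l ∈ Finset.Icc (-(m : ℤ)) ((ν : ℤ) - 1),
        (2 : ℝ) ^ (-(j : ℝ) / 2) * walsh n (((m : ℝ) + l) / 2 ^ j) *
          ∫ x in (0 : ℝ)..1, φ (x + l) * walsh (n / 2 ^ j) x := by
  have hφ : LocallyIntegrable φ volume := hL2.locallyIntegrable (by norm_num)
  have hj' : 2 * (ν : ℤ) ≤ 2 ^ j := by exact_mod_cast hj
  have hvanish : ∀ l : ℤ, l ≤ -ν ∨ ν ≤ l →
      ∫ t in (0 : ℝ)..1, φ (t + l) * walsh (n / 2 ^ j) t = 0 := fun l hl =>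
    integral_shift_mul_eq_zero hsupp _ <| hl.imp
      (fun hl => by linarith [(by exact_mod_cast hl : (l : ℝ) ≤ -ν)])
      (fun hl => by exact_mod_cast hl)
  have hleft := integral_scaled_mul_walsh_eq_sum hφ n j m
  have hright := integral_scaled_mul_walsh_eq_sum hφ n j (2 ^ j + m)
  push_cast at hleft hright
  simp_rw [add_mul]
  rw [intervalIntegral.integral_add (intervalIntegrable_scaled_mul_walsh hφ n j _ 0 1)
    (intervalIntegrable_scaled_mul_walsh hφ n j _ 0 1), hleft, hright, add_comm]
  congr 1 <;> refine (Finset.sum_subset (fun l hl => ?_) fun l hl hl' => ?_).symm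
  · simp only [Finset.mem_Icc, Finset.mem_Ico] at hl ⊢; omega
  · simp only [Finset.mem_Icc, Finset.mem_Ico] at hl hl'; rw [hvanish l (by omega), mul_zero]
  · simp only [Finset.mem_Icc, Finset.mem_Ico] at hl ⊢; omega
  · simp only [Finset.mem_Icc, Finset.mem_Ico] at hl hl'; rw [hvanish l (by omega), mul_zero]

/-- Left-edge periodized scaling functions: for `ν ≥ 2`,
`φ ∈ L²(ℝ)` supported in `[−ν+1, ν]`, `2^j ≥ 2ν` and `0 ≤ m ≤ ν−1`, the
Walsh coefficients of `φ^per_{j,m} = φ_{j,m} + φ_{j,2^j+m}` on `[0,1]` satisfy the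
stated two-sum formula. -/
theorem walsh_periodic_left_edge (ν : ℕ) (hν : 2 ≤ ν) (φ : ℝ → ℝ)
    (hL2 : MemLp φ 2 volume)
    (hsupp : ∀ᵐ x : ℝ, x ∉ Set.Icc (-(ν : ℝ) + 1) (ν : ℝ) → φ x = 0)
    (j : ℕ) (hj : 2 * ν ≤ 2 ^ j) (m : ℕ) (hm : m < ν) (n : ℕ) :
    ∫ x in (0 : ℝ)..1,
        ((2 : ℝ) ^ ((j : ℝ) / 2) * φ (2 ^ j * x - m) +
          (2 : ℝ) ^ ((j : ℝ) / 2) * φ (2 ^ j * x - (2 ^ j + m))) * walsh n x =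
      (∑ l ∈ Finset.Icc (-(ν : ℤ) + 1) (-(m : ℤ) - 1),
        (2 : ℝ) ^ (-(j : ℝ) / 2) * walsh n (((2 : ℝ) ^ j + m + l) / 2 ^ j) *
          ∫ x in (0 : ℝ)..1, φ (x + l) * walsh (n / 2 ^ j) x) +
      ∑ l ∈ Finset.Icc (-(m : ℤ)) ((ν : ℤ) - 1),
        (2 : ℝ) ^ (-(j : ℝ) / 2) * walsh n (((m : ℝ) + l) / 2 ^ j) *
          ∫ x in (0 : ℝ)..1, φ (x + l) * walsh (n / 2 ^ j) x :=
  walsh_periodic_left_edge_general ν φ hL2 hsupp j hj m hm n
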